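/- arXiv:0712.0374 — 2 statements merged into one kernel-verified Lean document; each statement's English description precedes it below -/
import Mathlib

section
/- There exists a constant C > 0 such that for every ε > 0, every function u : ℤ³ → ℂ with u(0) = 0 and |u(α)| ≤ ε/|α|² for all α ≠ 0, and every k ∈ ℤ³ with k ≠ 0, one has |k|·Σ_{α ∈ ℤ³, |α| > 2|k|} |u(α)|·|u(k−α)| ≤ C·ε². -/
/-- The Euclidean norm of a lattice point in `ℤ³`. -/
noncomputable def znorm (a : Fin 3 → ℤ) : ℝ := Real.sqrt (∑ i, ((a i : ℝ)) ^ 2)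

/-!
For `|α| > 2|k|` the triangle inequality gives `|k - α| ≥ |α|/2`, so each term of the sum is at
most `4ε²/|α|⁴`. Sorting lattice points into the cubic shells `max_i |α_i| = m`, each of which has
at most `26 m²` points, the tail `∑_{|α| > R} |α|⁻⁴` is bounded by a multiple of `∑_{m > R/2} m⁻²`,
hence by a multiple of `1/R`; with `R = 2|k|` this cancels the factor `|k|`.
-/

open Finset

lemma znorm_eq_norm (a : Fin 3 → ℤ) :
    znorm a = ‖(WithLp.toLp 2 fun i => (a i : ℝ) : EuclideanSpace ℝ (Fin 3))‖ := by
  simp [znorm, EuclideanSpace.norm_eq, sq_abs]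

lemma znorm_pos_iff {a : Fin 3 → ℤ} : 0 < znorm a ↔ a ≠ 0 := by
  rw [znorm_eq_norm, norm_pos_iff, Ne, Ne, WithLp.toLp_eq_zero, not_iff_not, funext_iff,
    funext_iff]
  simp

lemma znorm_sub_comm (a b : Fin 3 → ℤ) : znorm (a - b) = znorm (b - a) := by
  simp only [znorm, Pi.sub_apply, Int.cast_sub, ← neg_sub (b _ : ℝ), neg_sq]

lemma znorm_sub_znorm_le (a b : Fin 3 → ℤ) : znorm a - znorm b ≤ znorm (a - b) := by
  simp only [znorm_eq_norm]
  refine (norm_sub_norm_le _ _).trans_eq ?_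
  congr 1
  ext i
  simp

noncomputable def supNorm (a : Fin 3 → ℤ) : ℕ := univ.sup fun i => (a i).natAbs

lemma supNorm_le_znorm (a : Fin 3 → ℤ) : (supNorm a : ℝ) ≤ znorm a := by
  obtain ⟨i, -, hi⟩ := exists_mem_eq_sup univ univ_nonempty fun i => (a i).natAbs
  rw [supNorm, hi, Nat.cast_natAbs, Int.cast_abs, znorm,
    Real.le_sqrt (abs_nonneg _) (by positivity), sq_abs]
  exact single_le_sum (f := fun j => ((a j : ℝ)) ^ 2) (fun j _ => sq_nonneg _) (mem_univ i)

lemma znorm_le_two_mul_supNorm (a : Fin 3 → ℤ) : znorm a ≤ 2 * supNorm a := by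
  have hcoord : ∀ j, ((a j : ℝ)) ^ 2 ≤ (supNorm a : ℝ) ^ 2 := fun j => by
    have : (a j).natAbs ≤ supNorm a := le_sup (f := fun i => (a i).natAbs) (mem_univ j)
    rw [← sq_abs, ← Int.cast_abs, Int.abs_eq_natAbs]
    gcongr
    exact_mod_cast this
  rw [znorm, Real.sqrt_le_left (by positivity), Fin.sum_univ_three]
  nlinarith [hcoord 0, hcoord 1, hcoord 2]

lemma mem_Icc_neg_natCast {m : ℕ} {a : Fin 3 → ℤ} :
    a ∈ Icc (-(m : Fin 3 → ℤ)) m ↔ supNorm a ≤ m := by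
  simp only [mem_Icc, Pi.le_def, supNorm, Finset.sup_le_iff, mem_univ, true_implies,
    Pi.neg_apply, Pi.natCast_apply, ← forall_and]
  exact forall_congr' fun i => by omega

lemma card_Icc_neg_natCast (m : ℕ) : #(Icc (-(m : Fin 3 → ℤ)) m) = (2 * m + 1) ^ 3 := by
  simp only [Pi.card_Icc, Pi.neg_apply, Pi.natCast_apply, Int.card_Icc, prod_const, card_univ,
    Fintype.card_fin]
  congr 1
  omega

lemma mem_box_succ {m : ℕ} {a : Fin 3 → ℤ} :
    a ∈ (box (m + 1) : Finset (Fin 3 → ℤ)) ↔ supNorm a = m + 1 := by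
  rw [box_succ_eq_sdiff, mem_sdiff, mem_Icc_neg_natCast, mem_Icc_neg_natCast]
  omega

lemma card_box_succ_le (m : ℕ) : #(box (m + 1) : Finset (Fin 3 → ℤ)) ≤ 26 * (m + 1) ^ 2 := by
  have hsub : Icc (-(m : Fin 3 → ℤ)) m ⊆ Icc (-((m + 1 : ℕ) : Fin 3 → ℤ)) (m + 1 : ℕ) :=
    fun a ha => mem_Icc_neg_natCast.2 ((mem_Icc_neg_natCast.1 ha).trans m.le_succ)
  rw [box_succ_eq_sdiff, card_sdiff_of_subset hsub, card_Icc_neg_natCast, card_Icc_neg_natCast,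
    show (2 * (m + 1) + 1) ^ 3 = (2 * m + 1) ^ 3 + (24 * m ^ 2 + 48 * m + 26) by ring,
    Nat.add_sub_cancel_left]
  nlinarith

lemma sum_Icc_inv_sq_le {α : Type*} [Field α] [LinearOrder α] [IsStrictOrderedRing α]
    (k n : ℕ) : ∑ i ∈ Icc (k + 1) n, ((i : α) ^ 2)⁻¹ ≤ 2 / (k + 1) := by
  refine le_trans ?_ (sum_Ioo_inv_sq_le k (n + 1))
  refine sum_le_sum_of_subset_of_nonneg (fun i hi => ?_) fun _ _ _ => by positivity
  rw [mem_Icc] at hi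
  rw [mem_Ioo]
  omega

lemma sum_inv_supNorm_pow_four_le {R : ℝ} (hR : 0 < R) (s : Finset (Fin 3 → ℤ))
    (hs : ∀ a ∈ s, R < supNorm a) : ∑ a ∈ s, ((supNorm a : ℝ) ^ 4)⁻¹ ≤ 52 / R := by
  set k := ⌊R⌋₊
  have hmaps : ∀ a ∈ s, supNorm a ∈ Icc (k + 1) (s.sup supNorm) := fun a ha =>
    mem_Icc.2 ⟨(Nat.floor_lt hR.le).2 (hs a ha), le_sup ha⟩
  have hshell : ∀ m ∈ Icc (k + 1) (s.sup supNorm),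
      ∑ a ∈ s with supNorm a = m, ((supNorm a : ℝ) ^ 4)⁻¹ ≤ 26 * ((m : ℝ) ^ 2)⁻¹ := by
    intro m hm
    obtain ⟨m, rfl⟩ : ∃ m', m = m' + 1 := ⟨m - 1, by grind⟩
    calc ∑ a ∈ s with supNorm a = m + 1, ((supNorm a : ℝ) ^ 4)⁻¹
        = #{a ∈ s | supNorm a = m + 1} * (((m + 1 : ℕ) : ℝ) ^ 4)⁻¹ := by
          rw [sum_congr rfl fun a ha => by rw [(mem_filter.1 ha).2], sum_const, nsmul_eq_mul]
      _ ≤ (26 * (m + 1) ^ 2 : ℕ) * (((m + 1 : ℕ) : ℝ) ^ 4)⁻¹ := by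
          gcongr
          exact (card_le_card fun a ha => mem_box_succ.2 (mem_filter.1 ha).2).trans
            (card_box_succ_le m)
      _ = 26 * (((m + 1 : ℕ) : ℝ) ^ 2)⁻¹ := by
          push_cast
          field_simp
  calc ∑ a ∈ s, ((supNorm a : ℝ) ^ 4)⁻¹
      = ∑ m ∈ Icc (k + 1) (s.sup supNorm),
          ∑ a ∈ s with supNorm a = m, ((supNorm a : ℝ) ^ 4)⁻¹ :=
        (sum_fiberwise_of_maps_to hmaps _).symm
    _ ≤ 26 * ∑ m ∈ Icc (k + 1) (s.sup supNorm), ((m : ℝ) ^ 2)⁻¹ := by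
        rw [mul_sum]
        exact sum_le_sum hshell
    _ ≤ 26 * (2 / (k + 1)) := by
        gcongr
        exact sum_Icc_inv_sq_le k _
    _ ≤ 52 / R := by
        rw [← mul_div_assoc]
        gcongr
        · norm_num
        · exact (Nat.lt_floor_add_one R).le

lemma sum_inv_znorm_pow_four_le {R : ℝ} (hR : 0 < R) (s : Finset (Fin 3 → ℤ))
    (hs : ∀ a ∈ s, R < znorm a) : ∑ a ∈ s, (znorm a ^ 4)⁻¹ ≤ 104 / R := by
  have hsup : ∀ a ∈ s, R / 2 < supNorm a := fun a ha => by
    linarith [hs a ha, znorm_le_two_mul_supNorm a]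
  calc ∑ a ∈ s, (znorm a ^ 4)⁻¹ ≤ ∑ a ∈ s, ((supNorm a : ℝ) ^ 4)⁻¹ :=
        sum_le_sum fun a ha => by
          have : (0 : ℝ) < supNorm a := lt_trans (by positivity) (hsup a ha)
          gcongr
          exact supNorm_le_znorm a
    _ ≤ 52 / (R / 2) := sum_inv_supNorm_pow_four_le (by positivity) s hsup
    _ = 104 / R := by ring

lemma norm_mul_norm_sub_le {E : Type*} [SeminormedAddGroup E] {ε : ℝ} (hε : 0 ≤ ε)
    {u : (Fin 3 → ℤ) → E} (hu : ∀ α, α ≠ 0 → ‖u α‖ ≤ ε / znorm α ^ 2) {k α : Fin 3 → ℤ}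
    (hα : 2 * znorm k < znorm α) : ‖u α‖ * ‖u (k - α)‖ ≤ 4 * ε ^ 2 / znorm α ^ 4 := by
  have hαpos : 0 < znorm α := (mul_nonneg zero_le_two (Real.sqrt_nonneg _)).trans_lt hα
  have hhalf : znorm α / 2 ≤ znorm (k - α) := by
    linarith [znorm_sub_znorm_le α k, znorm_sub_comm α k]
  calc ‖u α‖ * ‖u (k - α)‖ ≤ ε / znorm α ^ 2 * (ε / (znorm α / 2) ^ 2) := by
        gcongr
        · exact hu α (znorm_pos_iff.1 hαpos)
        · exact (hu _ (znorm_pos_iff.1 (by linarith))).trans (by gcongr)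
    _ = 4 * ε ^ 2 / znorm α ^ 4 := by
        field_simp
        ring

lemma sum_norm_mul_norm_sub_le {E : Type*} [SeminormedAddGroup E] {ε : ℝ} (hε : 0 ≤ ε)
    {u : (Fin 3 → ℤ) → E} (hu : ∀ α, α ≠ 0 → ‖u α‖ ≤ ε / znorm α ^ 2) {k : Fin 3 → ℤ}
    (hk : k ≠ 0) (s : Finset {a : Fin 3 → ℤ // 2 * znorm k < znorm a}) :
    ∑ α ∈ s, ‖u α.1‖ * ‖u (k - α.1)‖ ≤ 208 * ε ^ 2 / znorm k := by
  have hkpos := znorm_pos_iff.2 hk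
  calc ∑ α ∈ s, ‖u α.1‖ * ‖u (k - α.1)‖
      ≤ ∑ α ∈ s, 4 * ε ^ 2 * (znorm α.1 ^ 4)⁻¹ :=
        sum_le_sum fun α _ => (norm_mul_norm_sub_le hε hu α.2).trans_eq (div_eq_mul_inv _ _)
    _ = 4 * ε ^ 2 * ∑ a ∈ s.map (Function.Embedding.subtype _), (znorm a ^ 4)⁻¹ := by
        rw [sum_map, mul_sum]
        rfl
    _ ≤ 4 * ε ^ 2 * (104 / (2 * znorm k)) := by
        gcongr
        exact sum_inv_znorm_pow_four_le (by positivity) _ (by simp +contextual)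
    _ = 208 * ε ^ 2 / znorm k := by
        field_simp
        ring

/-- There is a constant `C > 0` such that for every `ε > 0`, every `u : ℤ³ → ℂ` with
`u 0 = 0` and `|u α| ≤ ε/|α|²` for `α ≠ 0`, and every `k ≠ 0`,
`|k|·∑_{|α| > 2|k|} |u α|·|u (k−α)| ≤ C·ε²` (the sum converging). -/
theorem high_frequency_tail_bound :
    ∃ C : ℝ, 0 < C ∧
      ∀ (ε : ℝ), 0 < ε →
        ∀ (u : (Fin 3 → ℤ) → ℂ), u 0 = 0 →
          (∀ α : Fin 3 → ℤ, α ≠ 0 → ‖u α‖ ≤ ε / (znorm α) ^ 2) →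
          ∀ k : Fin 3 → ℤ, k ≠ 0 →
            Summable (fun α : {a : Fin 3 → ℤ // 2 * znorm k < znorm a} =>
              ‖u α.1‖ * ‖u (k - α.1)‖) ∧
            znorm k * (∑' α : {a : Fin 3 → ℤ // 2 * znorm k < znorm a},
              ‖u α.1‖ * ‖u (k - α.1)‖) ≤ C * ε ^ 2 := by
  refine ⟨208, by norm_num, fun ε hε u _ hu k hk => ?_⟩
  have hkpos := znorm_pos_iff.2 hk
  have hpartial := sum_norm_mul_norm_sub_le hε.le hu hk
  have hsummable := summable_of_sum_le (fun _ => by positivity) hpartial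
  refine ⟨hsummable, ?_⟩
  calc znorm k * ∑' α : {a : Fin 3 → ℤ // 2 * znorm k < znorm a}, ‖u α.1‖ * ‖u (k - α.1)‖
      ≤ znorm k * (208 * ε ^ 2 / znorm k) := by
        gcongr
        exact hsummable.tsum_le_of_sum_le hpartial
    _ = 208 * ε ^ 2 := by field_simp
end

section
/- There exists a constant C > 0 such that the following holds: for all D > 0, δ > 0, reals K ≥ 1 and R ≥ 1, every function u : ℤ³ → ℂ with u(0) = 0, with |u(α)| ≤ D/|α|² for all α ≠ 0, and with |u(β)| ≤ δ/|β|² for all β with |β| ≥ R, and every k ∈ ℤ³ with |k| ≥ 2R, one has Σ_{α ∈ ℤ³, 0 < |α| ≤ K, |k−α| ≥ |k|/2} |α|·|u(α)|·|u(k−α)| ≤ C·δ·D·K²/|k|². -/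
open Finset

lemma znorm_zero : znorm 0 = 0 := by simp [znorm]

lemma abs_le_znorm (a : Fin 3 → ℤ) (i : Fin 3) : |(a i : ℝ)| ≤ znorm a := by
  rw [← Real.sqrt_sq_eq_abs]
  exact Real.sqrt_le_sqrt (single_le_sum (f := fun j => ((a j : ℝ)) ^ 2)
    (fun j _ => sq_nonneg _) (mem_univ i))

lemma norm_le_znorm (a : Fin 3 → ℤ) : ‖a‖ ≤ znorm a :=
  (pi_norm_le_iff_of_nonneg (Real.sqrt_nonneg _)).2 fun i => by
    rw [Int.norm_eq_abs]; exact abs_le_znorm a i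

noncomputable def latticeBox (d N : ℕ) : Finset (Fin d → ℤ) :=
  Fintype.piFinset fun _ => Icc (-(N : ℤ)) N

section latticeBox

variable {d : ℕ}

lemma mem_latticeBox {N : ℕ} {a : Fin d → ℤ} : a ∈ latticeBox d N ↔ ‖a‖ ≤ N := by
  rw [latticeBox, Fintype.mem_piFinset, pi_norm_le_iff_of_nonneg (Nat.cast_nonneg N)]
  refine forall_congr' fun i => ?_
  rw [mem_Icc, ← abs_le, Int.norm_eq_abs, ← Int.cast_abs]
  exact_mod_cast Iff.rfl

lemma card_latticeBox (d N : ℕ) : #(latticeBox d N) = (2 * N + 1) ^ d := by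
  simp only [latticeBox, Fintype.card_piFinset, Int.card_Icc, prod_const, card_univ,
    Fintype.card_fin]
  congr 1
  omega

lemma latticeBox_mono {N M : ℕ} (h : N ≤ M) : latticeBox d N ⊆ latticeBox d M := fun a ha =>
  mem_latticeBox.2 <| (mem_latticeBox.1 ha).trans (by exact_mod_cast h)

lemma succ_le_norm_of_notMem_latticeBox {N : ℕ} {a : Fin d → ℤ} (ha : a ∉ latticeBox d N) :
    (N + 1 : ℝ) ≤ ‖a‖ := by
  rw [latticeBox, Fintype.mem_piFinset, not_forall] at ha
  obtain ⟨i, hi⟩ := ha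
  have hN : (N : ℤ) + 1 ≤ |a i| := by
    rw [mem_Icc, not_and_or, not_le, not_le] at hi
    rcases hi with hi | hi <;> [rw [abs_of_neg (by omega)]; rw [abs_of_pos (by omega)]] <;> omega
  calc (N + 1 : ℝ) ≤ |(a i : ℝ)| := by rw [← Int.cast_abs]; exact_mod_cast hN
    _ = ‖a i‖ := (Int.norm_eq_abs _).symm
    _ ≤ ‖a‖ := norm_le_pi_norm a i

/-- The origin contributes `‖0‖⁻¹ = 0`. -/
theorem sum_inv_norm_latticeBox_le (N : ℕ) :
    ∑ a ∈ latticeBox 3 N, ‖a‖⁻¹ ≤ 13 * N * (N + 1) := by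
  induction N with
  | zero => simp [latticeBox]
  | succ N ih =>
    have hsub := latticeBox_mono (d := 3) N.le_succ
    have hshell : ∀ a ∈ latticeBox 3 (N + 1) \ latticeBox 3 N, ‖a‖⁻¹ ≤ ((N + 1 : ℕ) : ℝ)⁻¹ :=
      fun a ha => inv_anti₀ (by positivity) (by
        push_cast; exact succ_le_norm_of_notMem_latticeBox (mem_sdiff.1 ha).2)
    have hcard : (#(latticeBox 3 (N + 1) \ latticeBox 3 N) : ℝ) = 24 * N ^ 2 + 48 * N + 26 := by
      rw [card_sdiff_of_subset hsub, Nat.cast_sub (card_le_card hsub), card_latticeBox,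
        card_latticeBox]
      push_cast; ring
    have hshell_sum : ∑ a ∈ latticeBox 3 (N + 1) \ latticeBox 3 N, ‖a‖⁻¹ ≤ 26 * (N + 1) := by
      calc _ ≤ #(latticeBox 3 (N + 1) \ latticeBox 3 N) * ((N + 1 : ℕ) : ℝ)⁻¹ := by
            simpa using sum_le_card_nsmul _ _ _ hshell
        _ ≤ 26 * (N + 1) := by
            rw [hcard, ← div_eq_mul_inv, div_le_iff₀ (by positivity)]; push_cast; nlinarith
    rw [← sum_sdiff hsub]
    push_cast
    nlinarith
end latticeBox

lemma znorm_mul_norm_mul_norm_sub_le {D δ R : ℝ} (hD : 0 ≤ D) (hδ : 0 ≤ δ) (hR : 0 < R)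
    {u : (Fin 3 → ℤ) → ℂ} (hu : ∀ α : Fin 3 → ℤ, α ≠ 0 → ‖u α‖ ≤ D / znorm α ^ 2)
    (hu_decay : ∀ β : Fin 3 → ℤ, R ≤ znorm β → ‖u β‖ ≤ δ / znorm β ^ 2)
    {k a : Fin 3 → ℤ} (hk : 2 * R ≤ znorm k) (ha : 0 < znorm a)
    (hka : znorm k / 2 ≤ znorm (k - a)) :
    znorm a * ‖u a‖ * ‖u (k - a)‖ ≤ 4 * δ * D / znorm k ^ 2 * ‖a‖⁻¹ := by
  have hk0 : 0 < znorm k := by linarith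
  have ha0 : a ≠ 0 := by rintro rfl; simp [znorm_zero] at ha
  have hua : znorm a * ‖u a‖ ≤ D * (znorm a)⁻¹ :=
    (mul_le_mul_of_nonneg_left (hu a ha0) ha.le).trans_eq (by field_simp)
  have huka : ‖u (k - a)‖ ≤ 4 * δ / znorm k ^ 2 := by
    have hka0 : 0 < znorm (k - a) := by linarith
    refine (hu_decay _ (by linarith)).trans ?_
    rw [div_le_div_iff₀ (by positivity) (by positivity)]
    nlinarith [pow_le_pow_left₀ (by positivity) hka 2]
  calc znorm a * ‖u a‖ * ‖u (k - a)‖ ≤ D * (znorm a)⁻¹ * (4 * δ / znorm k ^ 2) :=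
        mul_le_mul hua huka (norm_nonneg _) (by positivity)
    _ ≤ D * ‖a‖⁻¹ * (4 * δ / znorm k ^ 2) := by
        gcongr
        exact norm_le_znorm a
    _ = 4 * δ * D / znorm k ^ 2 * ‖a‖⁻¹ := by ring

/-- There is a constant `C > 0` such that: for all `D > 0`, `δ > 0`, `K ≥ 1`, `R ≥ 1`,
every `u : ℤ³ → ℂ` with `u 0 = 0`, `|u α| ≤ D/|α|²` for all `α ≠ 0`, and
`|u β| ≤ δ/|β|²` for all `|β| ≥ R`, and every `k` with `|k| ≥ 2R`,
`∑_{0 < |α| ≤ K, |k−α| ≥ |k|/2} |α|·|u α|·|u (k−α)| ≤ C·δ·D·K²/|k|²`. -/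
theorem low_frequency_piece_bound :
    ∃ C : ℝ, 0 < C ∧
      ∀ (D δ K R : ℝ), 0 < D → 0 < δ → 1 ≤ K → 1 ≤ R →
        ∀ u : (Fin 3 → ℤ) → ℂ, u 0 = 0 →
          (∀ α : Fin 3 → ℤ, α ≠ 0 → ‖u α‖ ≤ D / znorm α ^ 2) →
          (∀ β : Fin 3 → ℤ, R ≤ znorm β → ‖u β‖ ≤ δ / znorm β ^ 2) →
          ∀ k : Fin 3 → ℤ, 2 * R ≤ znorm k →
            (∑' α : {a : Fin 3 → ℤ //
                0 < znorm a ∧ znorm a ≤ K ∧ znorm k / 2 ≤ znorm (k - a)},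
              znorm α.1 * ‖u α.1‖ * ‖u (k - α.1)‖)
              ≤ C * δ * D * K ^ 2 / znorm k ^ 2 := by
  refine ⟨312, by norm_num, fun D δ K R hD hδ hK hR u _ hu hu_decay k hk => ?_⟩
  set s : Set (Fin 3 → ℤ) := {a | 0 < znorm a ∧ znorm a ≤ K ∧ znorm k / 2 ≤ znorm (k - a)}
  set f : (Fin 3 → ℤ) → ℝ := fun a => znorm a * ‖u a‖ * ‖u (k - a)‖
  set c := 4 * δ * D / znorm k ^ 2
  set N := ⌈K⌉₊
  have hN : (N : ℝ) < K + 1 := Nat.ceil_lt_add_one (by linarith)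
  have hsupp : ∀ a ∉ latticeBox 3 N, s.indicator f a = 0 := fun a ha =>
    Set.indicator_of_notMem (fun has => ha <| mem_latticeBox.2 <|
      ((norm_le_znorm a).trans has.2.1).trans (Nat.le_ceil K)) f
  have hpt : ∀ a ∈ latticeBox 3 N, s.indicator f a ≤ c * ‖a‖⁻¹ := fun a _ => by
    by_cases has : a ∈ s
    · rw [Set.indicator_of_mem has]
      exact znorm_mul_norm_mul_norm_sub_le hD.le hδ.le (by linarith) hu hu_decay hk has.1 has.2.2
    · rw [Set.indicator_of_notMem has]
      positivity
  calc (∑' α : s, f α) = ∑ a ∈ latticeBox 3 N, s.indicator f a :=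
        (tsum_subtype s f).trans (tsum_eq_sum hsupp)
    _ ≤ ∑ a ∈ latticeBox 3 N, c * ‖a‖⁻¹ := sum_le_sum hpt
    _ ≤ c * (13 * N * (N + 1)) := by
        rw [← mul_sum]; gcongr; exact sum_inv_norm_latticeBox_le N
    _ ≤ c * (78 * K ^ 2) :=
        mul_le_mul_of_nonneg_left (by nlinarith [N.cast_nonneg (α := ℝ)]) (by positivity)
    _ = 312 * δ * D * K ^ 2 / znorm k ^ 2 := by ring
end
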